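/- Fix n ∈ ℕ. For every matricially normed space E, the map v ↦ φ^v is a bijection from the closed unit ball B_{M_n(E)} onto the set of completely contractive operators from \widehat{M}_n to E. (This expresses that \widehat{M}_n is the ⊙_n-free matricially normed space with a one-point base, where ⊙_n is the rig E ↦ B_{M_n(E)}.) -/

import Mathlib

open scoped BigOperators
open Matrix

noncomputable section

/-- Block-diagonal sum `u ⊕ w` of two square matrices with entries in `E`. -/
def MatDSum {E : Type*} [Zero E] {m k : ℕ}
    (u : Matrix (Fin m) (Fin m) E) (w : Matrix (Fin k) (Fin k) E) :
    Matrix (Fin (m + k)) (Fin (m + k)) E :=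
  Matrix.reindex finSumFinEquiv finSumFinEquiv (Matrix.fromBlocks u 0 0 w)

/-- Left action `S·u` of a scalar matrix on an `E`-valued matrix. -/
def scalLeft {E : Type*} [AddCommMonoid E] [Module ℂ E] {m : ℕ}
    (S : Matrix (Fin m) (Fin m) ℂ) (u : Matrix (Fin m) (Fin m) E) :
    Matrix (Fin m) (Fin m) E :=
  Matrix.of fun i j => ∑ k, S i k • u k j

/-- Right action `u·S` of a scalar matrix on an `E`-valued matrix. -/
def scalRight {E : Type*} [AddCommMonoid E] [Module ℂ E] {m : ℕ}
    (u : Matrix (Fin m) (Fin m) E) (S : Matrix (Fin m) (Fin m) ℂ) :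
    Matrix (Fin m) (Fin m) E :=
  Matrix.of fun i j => ∑ k, S k j • u i k

/-- The operator norm `‖S‖_o` of a complex scalar matrix, i.e. its norm as an
operator on the euclidean (Hilbert) space `ℂⁿ`. -/
noncomputable def opNorm {m : ℕ} (S : Matrix (Fin m) (Fin m) ℂ) : ℝ :=
  ‖LinearMap.toContinuousLinearMap (Matrix.toEuclideanLin S)‖

/-- The `m`-th amplification of a map `φ : E → F`: apply `φ` entrywise. -/
def matAmpl {E F : Type*} (φ : E → F) {m : ℕ} (u : Matrix (Fin m) (Fin m) E) :
    Matrix (Fin m) (Fin m) F :=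
  Matrix.of fun i j => φ (u i j)

/-- The operator `φ^v : M_n → E`, `(λ_{ij}) ↦ Σ_{i,j} λ_{ji} • x_{ij}`, associated with
`v = (x_{ij}) ∈ M_n(E)`. -/
def matPhi {E : Type*} [AddCommMonoid E] [Module ℂ E] {n : ℕ}
    (v : Matrix (Fin n) (Fin n) E) (a : Matrix (Fin n) (Fin n) ℂ) : E :=
  ∑ i, ∑ j, a j i • v i j

/-- `ν` is a matrix-norm on the complex vector space `E`: each `ν m` is a norm on
`M_m(E)`, and Axioms 1 and 2 of Effros/Ruan hold. -/
def IsMatrixNorm {E : Type} [AddCommGroup E] [Module ℂ E]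
    (ν : ∀ m : ℕ, Matrix (Fin m) (Fin m) E → ℝ) : Prop :=
  (∀ (m : ℕ) (u v : Matrix (Fin m) (Fin m) E), ν m (u + v) ≤ ν m u + ν m v) ∧
  (∀ (m : ℕ) (c : ℂ) (u : Matrix (Fin m) (Fin m) E), ν m (c • u) = ‖c‖ * ν m u) ∧
  (∀ (m : ℕ) (u : Matrix (Fin m) (Fin m) E), ν m u = 0 ↔ u = 0) ∧
  (∀ (m k : ℕ) (u : Matrix (Fin m) (Fin m) E),
      ν (m + k) (MatDSum u (0 : Matrix (Fin k) (Fin k) E)) = ν m u) ∧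
  (∀ (m : ℕ) (S : Matrix (Fin m) (Fin m) ℂ) (u : Matrix (Fin m) (Fin m) E),
      ν m (scalLeft S u) ≤ opNorm S * ν m u) ∧
  (∀ (m : ℕ) (u : Matrix (Fin m) (Fin m) E) (S : Matrix (Fin m) (Fin m) ℂ),
      ν m (scalRight u S) ≤ ν m u * opNorm S)

/-- The set of values `‖(φ^v)_m(u)‖_m` over all proper couples `(E, v)`, i.e. over all
matricially normed spaces `E` and all `v` in the closed unit ball of `M_n(E)`. -/
def hatNormSet (n : ℕ) {m : ℕ}
    (u : Matrix (Fin m) (Fin m) (Matrix (Fin n) (Fin n) ℂ)) : Set ℝ :=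
  { r | ∃ (E : Type) (_ : AddCommGroup E) (_ : Module ℂ E)
        (ν : ∀ m' : ℕ, Matrix (Fin m') (Fin m') E → ℝ),
        IsMatrixNorm ν ∧
        ∃ v : Matrix (Fin n) (Fin n) E, ν n v ≤ 1 ∧ r = ν m (matAmpl (matPhi v) u) }

/-- The matrix-norm of the matricially normed space `M̂_n`:
`‖u‖_m = sup { ‖(φ^v)_m(u)‖_m : (E, v) a proper couple }`. -/
noncomputable def hatNorm (n : ℕ) {m : ℕ}
    (u : Matrix (Fin m) (Fin m) (Matrix (Fin n) (Fin n) ℂ)) : ℝ :=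
  sSup (hatNormSet n u)

/-- `φ` is a completely contractive (linear) operator between the matricially normed
spaces `(E, νE)` and `(F, νF)`: every amplification `φ_m` is contractive. -/
def IsCC {E F : Type} [AddCommGroup E] [Module ℂ E] [AddCommGroup F] [Module ℂ F]
    (νE : ∀ m : ℕ, Matrix (Fin m) (Fin m) E → ℝ)
    (νF : ∀ m : ℕ, Matrix (Fin m) (Fin m) F → ℝ) (φ : E → F) : Prop :=
  IsLinearMap ℂ φ ∧
  ∀ (m : ℕ) (u : Matrix (Fin m) (Fin m) E), νF m (matAmpl φ u) ≤ νE m u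


/-!
The entries of `(φ^v)_m(u)` are linear combinations of the entries of `v`, so `(φ^v)_m(u)` is a
combination, with the entries of `u` as coefficients, of matrices carrying one entry of `v`. Moving
an entry of `v` into place costs nothing: it is done by multiplying with matrix units (Axiom 2)
after padding with zeros (Axiom 1). Hence `‖(φ^v)_m(u)‖_m ≤ (∑ |u_{ijqp}|) ‖v‖_n`, the supremum
defining `M̂_n` is finite, and `φ^v` is completely contractive whenever `‖v‖_n ≤ 1`.

Conversely, the base point `ε = (e_{ji})_{ij} ∈ M_n(M̂_n)` satisfies `(φ^w)_n(ε) = w` for every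
proper couple `(F, w)`, so `‖ε‖_n ≤ 1`. For a completely contractive `φ` the matrix `φ_n(ε)` thus
lies in the unit ball, and `φ^{φ_n(ε)} = φ` by linearity: `φ ↦ φ_n(ε)` inverts `v ↦ φ^v`.
-/

open Finset

theorem apply_reindex_finCongr {E : Type*} (ν : ∀ m : ℕ, Matrix (Fin m) (Fin m) E → ℝ)
    {a b : ℕ} (h : a = b) (w : Matrix (Fin a) (Fin a) E) :
    ν b (reindex (finCongr h) (finCongr h) w) = ν a w := by
  subst h
  simp

theorem reindex_finCongr_single {E : Type*} [Zero E] {a b : ℕ} (h : a = b) (i j : Fin a)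
    (x : E) :
    reindex (finCongr h) (finCongr h) (single i j x) = single (Fin.cast h i) (Fin.cast h j) x := by
  subst h
  simp

theorem matDSum_single_zero {E : Type*} [Zero E] {m k : ℕ} (i j : Fin m) (x : E) :
    MatDSum (single i j x) (0 : Matrix (Fin k) (Fin k) E) =
      single (Fin.castAdd k i) (Fin.castAdd k j) x := by
  ext a b
  induction a using Fin.addCases <;> induction b using Fin.addCases <;>
    simp [MatDSum, single_apply, Fin.ext_iff] <;> omega

@[simp]
theorem matDSum_apply_castAdd {E : Type*} [Zero E] {m k : ℕ} (v : Matrix (Fin m) (Fin m) E)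
    (w : Matrix (Fin k) (Fin k) E) (p q : Fin m) :
    MatDSum v w (Fin.castAdd k p) (Fin.castAdd k q) = v p q := by
  simp [MatDSum]

theorem opNorm_single_one_le {m : ℕ} (i j : Fin m) : opNorm (single i j (1 : ℂ)) ≤ 1 := by
  refine ContinuousLinearMap.opNorm_le_bound _ zero_le_one fun x => ?_
  have hx : toEuclideanLin (single i j (1 : ℂ)) x = EuclideanSpace.single i (x j) := by
    ext a
    simp [single_mulVec, Function.update_apply]
  rw [LinearMap.coe_toContinuousLinearMap', hx, EuclideanSpace.single, PiLp.norm_single, one_mul]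
  exact PiLp.norm_apply_le x j

theorem scalLeft_single_scalRight_single {E : Type*} [AddCommMonoid E] [Module ℂ E] {m : ℕ}
    (w : Matrix (Fin m) (Fin m) E) (i j p q : Fin m) :
    scalLeft (single i p (1 : ℂ)) (scalRight w (single q j 1)) = single i j (w p q) := by
  ext a b
  by_cases ha : i = a <;> by_cases hb : j = b <;> simp [scalLeft, scalRight, single_apply, ha, hb]

theorem matAmpl_matPhi_eq_sum {E : Type*} [AddCommMonoid E] [Module ℂ E] {m n : ℕ}
    (v : Matrix (Fin n) (Fin n) E) (u : Matrix (Fin m) (Fin m) (Matrix (Fin n) (Fin n) ℂ)) :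
    matAmpl (matPhi v) u = ∑ i, ∑ j, ∑ p, ∑ q, u i j q p • single i j (v p q) := by
  ext a b
  simp [matAmpl, matPhi, Matrix.sum_apply, single_apply, ite_and]

namespace IsMatrixNorm

variable {E : Type} [AddCommGroup E] [Module ℂ E] {ν : ∀ m : ℕ, Matrix (Fin m) (Fin m) E → ℝ}

theorem add_le (hν : IsMatrixNorm ν) {m : ℕ} (u v : Matrix (Fin m) (Fin m) E) :
    ν m (u + v) ≤ ν m u + ν m v :=
  hν.1 m u v

theorem smul (hν : IsMatrixNorm ν) {m : ℕ} (c : ℂ) (u : Matrix (Fin m) (Fin m) E) :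
    ν m (c • u) = ‖c‖ * ν m u :=
  hν.2.1 m c u

theorem map_zero (hν : IsMatrixNorm ν) (m : ℕ) : ν m 0 = 0 :=
  (hν.2.2.1 m 0).2 rfl

theorem matDSum_zero (hν : IsMatrixNorm ν) {m k : ℕ} (u : Matrix (Fin m) (Fin m) E) :
    ν (m + k) (MatDSum u (0 : Matrix (Fin k) (Fin k) E)) = ν m u :=
  hν.2.2.2.1 m k u

theorem scalLeft_le (hν : IsMatrixNorm ν) {m : ℕ} (S : Matrix (Fin m) (Fin m) ℂ)
    (u : Matrix (Fin m) (Fin m) E) : ν m (scalLeft S u) ≤ opNorm S * ν m u :=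
  hν.2.2.2.2.1 m S u

theorem scalRight_le (hν : IsMatrixNorm ν) {m : ℕ} (u : Matrix (Fin m) (Fin m) E)
    (S : Matrix (Fin m) (Fin m) ℂ) : ν m (scalRight u S) ≤ ν m u * opNorm S :=
  hν.2.2.2.2.2 m u S

theorem nonneg (hν : IsMatrixNorm ν) {m : ℕ} (u : Matrix (Fin m) (Fin m) E) : 0 ≤ ν m u := by
  have h := hν.add_le u (-u)
  rw [add_neg_cancel, hν.map_zero, ← neg_one_smul ℂ u, hν.smul] at h
  simp only [norm_neg, norm_one, one_mul] at h
  linarith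

theorem sum_le (hν : IsMatrixNorm ν) {m : ℕ} {ι : Type*} (s : Finset ι)
    (f : ι → Matrix (Fin m) (Fin m) E) : ν m (∑ i ∈ s, f i) ≤ ∑ i ∈ s, ν m (f i) :=
  le_sum_of_subadditive (ν m) (hν.map_zero m).le hν.add_le s f

theorem single_apply_le (hν : IsMatrixNorm ν) {m : ℕ} (w : Matrix (Fin m) (Fin m) E)
    (i j p q : Fin m) : ν m (single i j (w p q)) ≤ ν m w := by
  have hright : ν m (scalRight w (single q j 1)) ≤ ν m w :=
    (hν.scalRight_le w _).trans (mul_le_of_le_one_right (hν.nonneg w) (opNorm_single_one_le q j))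
  rw [← scalLeft_single_scalRight_single]
  calc ν m (scalLeft (single i p 1) (scalRight w (single q j 1)))
      ≤ opNorm (single i p 1) * ν m (scalRight w (single q j 1)) := hν.scalLeft_le _ _
    _ ≤ ν m w := (mul_le_of_le_one_left (hν.nonneg _) (opNorm_single_one_le i p)).trans hright

theorem single_le (hν : IsMatrixNorm ν) {m n : ℕ} (v : Matrix (Fin n) (Fin n) E)
    (i j : Fin m) (p q : Fin n) : ν m (single i j (v p q)) ≤ ν n v := by
  set i' := Fin.cast (add_comm m n) (Fin.castAdd n i)
  set j' := Fin.cast (add_comm m n) (Fin.castAdd n j)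
  calc ν m (single i j (v p q))
      = ν (m + n) (single (Fin.castAdd n i) (Fin.castAdd n j) (v p q)) := by
        rw [← matDSum_single_zero, hν.matDSum_zero]
    _ = ν (n + m) (single i' j' (v p q)) := by
        rw [← reindex_finCongr_single, apply_reindex_finCongr ν]
    _ ≤ ν (n + m) (MatDSum v (0 : Matrix (Fin m) (Fin m) E)) := by
        simpa using hν.single_apply_le (MatDSum v 0) i' j' (Fin.castAdd m p) (Fin.castAdd m q)
    _ = ν n v := hν.matDSum_zero v

theorem matAmpl_matPhi_le (hν : IsMatrixNorm ν) {m n : ℕ} (v : Matrix (Fin n) (Fin n) E)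
    (u : Matrix (Fin m) (Fin m) (Matrix (Fin n) (Fin n) ℂ)) :
    ν m (matAmpl (matPhi v) u) ≤ (∑ i, ∑ j, ∑ p, ∑ q, ‖u i j q p‖) * ν n v := by
  rw [matAmpl_matPhi_eq_sum]
  simp only [sum_mul]
  refine (hν.sum_le _ _).trans (sum_le_sum fun i _ => ?_)
  refine (hν.sum_le _ _).trans (sum_le_sum fun j _ => ?_)
  refine (hν.sum_le _ _).trans (sum_le_sum fun p _ => ?_)
  refine (hν.sum_le _ _).trans (sum_le_sum fun q _ => ?_)
  rw [hν.smul]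
  gcongr
  exact hν.single_le v i j p q

end IsMatrixNorm

theorem hatNormSet_bddAbove (n : ℕ) {m : ℕ}
    (u : Matrix (Fin m) (Fin m) (Matrix (Fin n) (Fin n) ℂ)) : BddAbove (hatNormSet n u) := by
  refine ⟨∑ i, ∑ j, ∑ p, ∑ q, ‖u i j q p‖, ?_⟩
  rintro r ⟨F, _, _, νF, hF, v, hv, rfl⟩
  refine (hF.matAmpl_matPhi_le v u).trans (mul_le_of_le_one_right ?_ hv)
  positivity

theorem le_hatNorm {E : Type} [AddCommGroup E] [Module ℂ E]
    {ν : ∀ m : ℕ, Matrix (Fin m) (Fin m) E → ℝ} (hν : IsMatrixNorm ν) {n : ℕ}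
    {v : Matrix (Fin n) (Fin n) E} (hv : ν n v ≤ 1) (m : ℕ)
    (u : Matrix (Fin m) (Fin m) (Matrix (Fin n) (Fin n) ℂ)) :
    ν m (matAmpl (matPhi v) u) ≤ hatNorm n u :=
  le_csSup (hatNormSet_bddAbove n u) ⟨E, inferInstance, inferInstance, ν, hν, v, hv, rfl⟩

theorem matPhi_isLinearMap {E : Type*} [AddCommMonoid E] [Module ℂ E] {n : ℕ}
    (v : Matrix (Fin n) (Fin n) E) : IsLinearMap ℂ (matPhi v) where
  map_add a b := by simp [matPhi, add_smul, sum_add_distrib]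
  map_smul c a := by simp [matPhi, smul_sum, smul_smul]

def hatBasePoint (n : ℕ) : Matrix (Fin n) (Fin n) (Matrix (Fin n) (Fin n) ℂ) :=
  of fun i j => single j i 1

theorem matAmpl_matPhi_hatBasePoint {E : Type*} [AddCommMonoid E] [Module ℂ E] {n : ℕ}
    (v : Matrix (Fin n) (Fin n) E) : matAmpl (matPhi v) (hatBasePoint n) = v := by
  ext i j
  simp [matAmpl, matPhi, hatBasePoint, single_apply, ite_and]

theorem hatNorm_hatBasePoint_le_one (n : ℕ) : hatNorm n (hatBasePoint n) ≤ 1 := by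
  refine Real.sSup_le ?_ zero_le_one
  rintro r ⟨F, _, _, νF, _, v, hv, rfl⟩
  rwa [matAmpl_matPhi_hatBasePoint]

theorem matPhi_matAmpl_hatBasePoint {E : Type*} [AddCommMonoid E] [Module ℂ E] {n : ℕ}
    {φ : Matrix (Fin n) (Fin n) ℂ → E} (hφ : IsLinearMap ℂ φ) :
    matPhi (matAmpl φ (hatBasePoint n)) = φ := by
  funext a
  let φL := IsLinearMap.mk' φ hφ
  calc matPhi (matAmpl φ (hatBasePoint n)) a = ∑ i, ∑ j, a j i • φL (single j i 1) := rfl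
    _ = φL (∑ j, ∑ i, single j i (a j i)) := by
        simp only [map_sum, ← map_smul, smul_single, smul_eq_mul, mul_one]
        exact sum_comm
    _ = φ a := by rw [← matrix_eq_sum_single]; rfl

theorem hatMn_free_one_point_general (n : ℕ) (E : Type)
    [AddCommGroup E] [Module ℂ E]
    (νE : ∀ m : ℕ, Matrix (Fin m) (Fin m) E → ℝ) (hE : IsMatrixNorm νE) :
    Set.BijOn (fun v : Matrix (Fin n) (Fin n) E => matPhi v)
      { v : Matrix (Fin n) (Fin n) E | νE n v ≤ 1 }
      { φ : Matrix (Fin n) (Fin n) ℂ → E |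
        IsCC (fun m (u : Matrix (Fin m) (Fin m) (Matrix (Fin n) (Fin n) ℂ)) =>
          hatNorm n u) νE φ } := by
  have hinv : Set.InvOn (fun φ => matAmpl φ (hatBasePoint n)) (fun v => matPhi v)
      {v | νE n v ≤ 1} {φ | IsCC (fun m u => hatNorm n u) νE φ} :=
    ⟨fun v _ => matAmpl_matPhi_hatBasePoint v, fun φ hφ => matPhi_matAmpl_hatBasePoint hφ.1⟩
  exact hinv.bijOn (fun v hv => ⟨matPhi_isLinearMap v, le_hatNorm hE hv⟩)
    fun φ hφ => (hφ.2 n _).trans (hatNorm_hatBasePoint_le_one n)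

/-- **Theorem 2.** For every matricially normed space `(E, νE)`, the map `v ↦ φ^v` is a
bijection from the closed unit ball of `M_n(E)` onto the set of completely contractive
operators from `M̂_n` to `E`.  (`M̂_n` is the `⊙_n`-free matricially normed space with a
one-point base.) -/
theorem hatMn_free_one_point (n : ℕ) (hn : 0 < n) (E : Type)
    [AddCommGroup E] [Module ℂ E]
    (νE : ∀ m : ℕ, Matrix (Fin m) (Fin m) E → ℝ) (hE : IsMatrixNorm νE) :
    Set.BijOn (fun v : Matrix (Fin n) (Fin n) E => matPhi v)
      { v : Matrix (Fin n) (Fin n) E | νE n v ≤ 1 }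
      { φ : Matrix (Fin n) (Fin n) ℂ → E |
        IsCC (fun m (u : Matrix (Fin m) (Fin m) (Matrix (Fin n) (Fin n) ℂ)) =>
          hatNorm n u) νE φ } :=
  hatMn_free_one_point_general n E νE hE
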